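/- (Monotonicity of the Umegaki relative entropy under measurement.) Let ρ0, ρ1 be positive definite density matrices on ℂ^D, and let {E_b}_{b=1}^n be a POVM in which each E_b is nonzero, with outcome probabilities p0(b) = Re tr(ρ0 E_b) and p1(b) = Re tr(ρ1 E_b) (both strictly positive). Then the classical Kullback–Leibler relative information satisfies Σ_{b=1}^n p0(b) ln(p0(b)/p1(b)) ≤ Re tr(ρ0 (ln ρ0 − ln ρ1)), where ln σ denotes the matrix logarithm of a positive definite Hermitian matrix σ, i.e., the matrix obtained by applying ln to the eigenvalues of σ in its spectral decomposition. -/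

import Mathlib

open Matrix
open scoped ComplexOrder

set_option maxHeartbeats 1000000

variable {D n : ℕ}

section PortHelpers
open scoped MatrixOrder

noncomputable def Matrix.PosSemidef.sqrt {A : Matrix (Fin D) (Fin D) ℂ} (_ : A.PosSemidef) :
    Matrix (Fin D) (Fin D) ℂ :=
  CFC.sqrt A

lemma Matrix.PosSemidef.posSemidef_sqrt {A : Matrix (Fin D) (Fin D) ℂ} (hA : A.PosSemidef) :
    hA.sqrt.PosSemidef :=
  (CFC.sqrt_nonneg A).posSemidef

lemma Matrix.PosSemidef.sqrt_mul_self {A : Matrix (Fin D) (Fin D) ℂ} (hA : A.PosSemidef) :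
    hA.sqrt * hA.sqrt = A :=
  CFC.sqrt_mul_sqrt_self A hA.nonneg

lemma Matrix.posSemidef_iff_eq_transpose_mul_self {A : Matrix (Fin D) (Fin D) ℂ} :
    A.PosSemidef ↔ ∃ B : Matrix (Fin D) (Fin D) ℂ, A = Bᴴ * B := by
  constructor
  · intro h
    obtain ⟨B, hB⟩ := CStarAlgebra.nonneg_iff_eq_star_mul_self.mp h.nonneg
    exact ⟨B, hB⟩
  · rintro ⟨B, rfl⟩
    exact posSemidef_conjTranspose_mul_self B

end PortHelpers

lemma conj_mul_self_eq (z : ℂ) : (starRingEnd ℂ) z * z = ((‖z‖ ^ 2 : ℝ) : ℂ) := by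
  rw [mul_comm, Complex.mul_conj']; push_cast; ring

-- H5: generic trace computation
lemma trace_diag_conj_diag (d e : Fin D → ℝ) (V : Matrix (Fin D) (Fin D) ℂ) :
    ((Matrix.diagonal (fun i => (d i : ℂ)) *
      (Vᴴ * (Matrix.diagonal (fun i => (e i : ℂ)) * V))).trace).re
    = ∑ b, ∑ a, d b * (e a * ‖V a b‖ ^ 2) := by
  have h : (Matrix.diagonal (fun i => (d i : ℂ)) *
      (Vᴴ * (Matrix.diagonal (fun i => (e i : ℂ)) * V))).trace
      = ∑ b, ∑ a, (d b : ℂ) * ((e a : ℂ) * ((starRingEnd ℂ) (V a b) * V a b)) := by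
    simp [Matrix.trace, Matrix.mul_apply, Matrix.diagonal, Finset.mul_sum,
      Matrix.conjTranspose_apply]
    congr 1; ext b; congr 1; ext a; ring
  rw [h]
  rw [Complex.re_sum]
  refine Finset.sum_congr rfl fun b _ => ?_
  rw [Complex.re_sum]
  refine Finset.sum_congr rfl fun a _ => ?_
  rw [conj_mul_self_eq, ← Complex.ofReal_mul, ← Complex.ofReal_mul, Complex.ofReal_re]

-- trace of Bᴴ * B as sum of squared norms
lemma trace_conjTranspose_mul_self_re (B : Matrix (Fin D) (Fin D) ℂ) :
    ((Bᴴ * B).trace).re = ∑ j, ∑ i, ‖B i j‖ ^ 2 := by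
  have h : (Bᴴ * B).trace = ∑ j, ∑ i, ((‖B i j‖ ^ 2 : ℝ) : ℂ) := by
    simp [Matrix.trace, Matrix.mul_apply, Matrix.conjTranspose_apply, conj_mul_self_eq]
  rw [h, Complex.re_sum]
  exact Finset.sum_congr rfl fun j _ => by
    rw [Complex.re_sum]
    exact Finset.sum_congr rfl fun i _ => by rw [Complex.ofReal_re]

lemma psd_trace_re_nonneg {A : Matrix (Fin D) (Fin D) ℂ} (hA : A.PosSemidef) :
    0 ≤ A.trace.re := by
  obtain ⟨B, hB⟩ := Matrix.posSemidef_iff_eq_transpose_mul_self.mp hA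
  rw [hB, trace_conjTranspose_mul_self_re]
  positivity

lemma trace_mul_psd_nonneg {A B : Matrix (Fin D) (Fin D) ℂ}
    (hA : A.PosSemidef) (hB : B.PosSemidef) : 0 ≤ ((A * B).trace).re := by
  have h1 : A * B = A * hB.sqrt * hB.sqrt := by
    rw [Matrix.mul_assoc, hB.sqrt_mul_self]
  have h2 : ((A * B).trace) = ((hB.sqrt * A * hB.sqrt).trace) := by
    rw [h1, Matrix.trace_mul_comm, ← Matrix.mul_assoc]
  rw [h2]
  have h3 : (hB.sqrt * A * hB.sqrt).PosSemidef := by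
    have := hA.mul_mul_conjTranspose_same hB.sqrt
    rwa [hB.posSemidef_sqrt.isHermitian.eq] at this
  exact psd_trace_re_nonneg h3

lemma trace_mul_pos {ρ E : Matrix (Fin D) (Fin D) ℂ}
    (hρ : ρ.PosDef) (hE : E.PosSemidef) (hne : E ≠ 0) : 0 < ((ρ * E).trace).re := by
  obtain ⟨R, hRherm, hRR, hRdet⟩ : ∃ R : Matrix (Fin D) (Fin D) ℂ,
      Rᴴ = R ∧ R * R = ρ ∧ IsUnit R.det := by
    refine ⟨hρ.posSemidef.sqrt, hρ.posSemidef.posSemidef_sqrt.isHermitian.eq,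
      hρ.posSemidef.sqrt_mul_self, ?_⟩
    have h1 : hρ.posSemidef.sqrt.det * hρ.posSemidef.sqrt.det = ρ.det := by
      rw [← Matrix.det_mul, hρ.posSemidef.sqrt_mul_self]
    have hd := hρ.det_pos
    refine isUnit_iff_ne_zero.mpr fun hz => ?_
    rw [hz, mul_zero] at h1
    rw [← h1] at hd; exact lt_irrefl _ hd
  obtain ⟨S, hSherm, hSS⟩ : ∃ S : Matrix (Fin D) (Fin D) ℂ, Sᴴ = S ∧ S * S = E :=
    ⟨hE.sqrt, hE.posSemidef_sqrt.isHermitian.eq, hE.sqrt_mul_self⟩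
  have hB : (ρ * E).trace = (((R * S))ᴴ * (R * S)).trace := by
    rw [Matrix.conjTranspose_mul, hRherm, hSherm]
    have h1 : ρ * E = R * (R * (S * S)) := by
      rw [← hRR, ← hSS]; simp only [Matrix.mul_assoc]
    calc (ρ * E).trace = (R * (R * (S*S))).trace := by rw [h1]
      _ = ((R * (S*S)) * R).trace := Matrix.trace_mul_comm _ _
      _ = ((R*S) * (S*R)).trace := by simp only [Matrix.mul_assoc]
      _ = ((S*R) * (R*S)).trace := Matrix.trace_mul_comm _ _
  have hBne : R * S ≠ 0 := by
    intro h0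
    apply hne
    have hSz : S = 0 := by
      have h2 := congrArg (fun M => R⁻¹ * M) h0
      simpa [← Matrix.mul_assoc, Matrix.nonsing_inv_mul R hRdet] using h2
    rw [← hSS, hSz, Matrix.mul_zero]
  rw [hB, trace_conjTranspose_mul_self_re]
  have hne' : ∃ i j, (R * S) i j ≠ 0 := by
    by_contra h
    push_neg at h
    exact hBne (by ext i j; simp [h i j])
  obtain ⟨i, j, hij⟩ := hne'
  have h1 : (0:ℝ) < ‖(R*S) i j‖ ^ 2 := by
    have := norm_pos_iff.mpr hij
    positivity
  have h2 : ‖(R*S) i j‖ ^ 2 ≤ ∑ i', ‖(R*S) i' j‖ ^ 2 :=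
    Finset.single_le_sum (f := fun i' => ‖(R*S) i' j‖^2)
      (fun k _ => by positivity) (Finset.mem_univ i)
  have h3 : ∑ i', ‖(R*S) i' j‖ ^ 2 ≤ ∑ j', ∑ i', ‖(R*S) i' j'‖ ^ 2 :=
    Finset.single_le_sum (f := fun j' => ∑ i', ‖(R*S) i' j'‖^2)
      (fun k _ => Finset.sum_nonneg fun i' _ => by positivity) (Finset.mem_univ j)
  linarith

section SpectralHelpers
variable (U W : Matrix (Fin D) (Fin D) ℂ)

lemma trace_spectral_pair (d e : Fin D → ℝ) :
    (((U * Matrix.diagonal (fun i => (d i : ℂ)) * Uᴴ) *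
      (W * Matrix.diagonal (fun i => (e i : ℂ)) * Wᴴ)).trace).re
    = ∑ b, ∑ a, d b * (e a * ‖(Wᴴ * U) a b‖ ^ 2) := by
  have e1 : (U * Matrix.diagonal (fun i => (d i : ℂ)) * Uᴴ) *
      (W * Matrix.diagonal (fun i => (e i : ℂ)) * Wᴴ)
      = U * (Matrix.diagonal (fun i => (d i : ℂ)) *
        (Uᴴ * (W * (Matrix.diagonal (fun i => (e i : ℂ)) * Wᴴ)))) := by
    simp only [Matrix.mul_assoc]
  have e2 : Matrix.diagonal (fun i => (d i : ℂ)) *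
        (Uᴴ * (W * (Matrix.diagonal (fun i => (e i : ℂ)) * Wᴴ))) * U
      = Matrix.diagonal (fun i => (d i : ℂ)) *
        ((Wᴴ * U)ᴴ * (Matrix.diagonal (fun i => (e i : ℂ)) * (Wᴴ * U))) := by
    rw [Matrix.conjTranspose_mul, Matrix.conjTranspose_conjTranspose]
    simp only [Matrix.mul_assoc]
  rw [e1, Matrix.trace_mul_comm, e2, trace_diag_conj_diag]

lemma trace_spectral_sq (C : Matrix (Fin D) (Fin D) ℂ) (d : Fin D → ℝ)
    (hW : W * Wᴴ = 1) (hC : Cᴴ = C) :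
    (((U * Matrix.diagonal (fun i => (d i : ℂ)) * Uᴴ) * (C * C)).trace).re
    = ∑ b, ∑ a, d b * ‖(Wᴴ * (C * U)) a b‖ ^ 2 := by
  have main := trace_diag_conj_diag d (fun _ => (1:ℝ)) (Wᴴ * (C * U))
  simp only [Complex.ofReal_one, Matrix.diagonal_one, Matrix.one_mul, one_mul] at main
  rw [← main]
  congr 1
  have hK : (Wᴴ * (C * U))ᴴ * (Wᴴ * (C * U)) = Uᴴ * (C * (C * U)) := by
    simp only [Matrix.conjTranspose_mul, Matrix.conjTranspose_conjTranspose, hC,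
      Matrix.mul_assoc]
    rw [show W * (Wᴴ * (C * U)) = C * U from by rw [← Matrix.mul_assoc, hW, Matrix.one_mul]]
  have e1 : (U * Matrix.diagonal (fun i => (d i : ℂ)) * Uᴴ) * (C * C)
      = U * (Matrix.diagonal (fun i => (d i : ℂ)) * (Uᴴ * (C * C))) := by
    simp only [Matrix.mul_assoc]
  rw [e1, Matrix.trace_mul_comm, hK]
  congr 1
  simp only [Matrix.mul_assoc]

lemma trace_spectral_diag (d : Fin D → ℝ) (hU : Uᴴ * U = 1) :
    ((U * Matrix.diagonal (fun i => (d i : ℂ)) * Uᴴ).trace) = ∑ b, (d b : ℂ) := by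
  rw [Matrix.trace_mul_comm, ← Matrix.mul_assoc, hU, Matrix.one_mul, Matrix.trace_diagonal]

lemma sum_sq_norm_col (V : Matrix (Fin D) (Fin D) ℂ) (hV : Vᴴ * V = 1) (b : Fin D) :
    ∑ a, ‖V a b‖ ^ 2 = 1 := by
  have h : ((Vᴴ * V) b b) = ∑ a, ((‖V a b‖ ^ 2 : ℝ) : ℂ) := by
    simp [Matrix.mul_apply, Matrix.conjTranspose_apply, conj_mul_self_eq]
  rw [hV] at h
  have h2 := congrArg Complex.re h.symm
  simpa [Complex.re_sum, Matrix.one_apply_eq, ← Complex.ofReal_pow] using h2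

end SpectralHelpers

-- scalar Cauchy-Schwarz for the parallel-sum bound
lemma scalar_cs {r s u β : ℝ} (hr : 0 < r) (hs : 0 < s) (hu : 0 < u) (hβ : 0 < β)
    (k l : ℂ) :
    ‖k + l‖ ^ 2 * (r * s / (u * r + β * s)) ≤ r * ‖k‖ ^ 2 / β + s * ‖l‖ ^ 2 / u := by
  have hden : 0 < u * r + β * s := by positivity
  have h2 : ‖k + l‖ ^ 2 ≤ (‖k‖ + ‖l‖) ^ 2 := by
    have := norm_add_le k l
    nlinarith [norm_nonneg (k + l), norm_nonneg k, norm_nonneg l]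
  rw [mul_div_assoc' ,div_add_div _ _ (ne_of_gt hβ) (ne_of_gt hu),
    div_le_div_iff₀ hden (by positivity)]
  nlinarith [sq_nonneg (u * r * ‖k‖ - β * s * ‖l‖), norm_nonneg k, norm_nonneg l,
    mul_pos (mul_pos hr hs) (mul_pos hβ hu)]

-- the harmonic-mean identity for the optimizer
lemma lambda_identity {p q u β : ℝ} (hp : 0 < p) (hq : 0 < q) (hu : 0 < u) (hβ : 0 < β) :
    (β * q / (u * p + β * q)) ^ 2 * p / β + (1 - β * q / (u * p + β * q)) ^ 2 * q / u
      = p * q / (u * p + β * q) := by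
  have hden : 0 < u * p + β * q := by positivity
  have h1 : 1 - β * q / (u * p + β * q) = u * p / (u * p + β * q) := by
    field_simp
    ring
  rw [h1]
  field_simp
  ring

-- the transformation identity per term
lemma term_transform {w r s u : ℝ} (hden : u * r + (1 - u) * s ≠ 0) (hu : u ≠ 0) :
    w * ((r - s) / (u * r + (1 - u) * s))
      = (1 / u) * (w - w * (s / (u * r + (1 - u) * s))) := by
  rw [eq_comm, one_div_mul_eq_div, div_eq_iff hu, sub_eq_iff_eq_add, ← mul_div_assoc, ← mul_div_assoc, div_mul_eq_mul_div,
    ← add_div, eq_div_iff hden]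
  ring

-- operator Cauchy-Schwarz: tr(σ C²) ≤ ∑ c_b² tr(σ E_b) for C = ∑ c_b E_b
lemma op_cs {σ : Matrix (Fin D) (Fin D) ℂ} (hσ : σ.PosSemidef)
    (E : Fin n → Matrix (Fin D) (Fin D) ℂ) (hE : ∀ b, (E b).PosSemidef)
    (hEsum : ∑ b, E b = 1) (c : Fin n → ℝ) :
    ((σ * ((∑ b, (c b : ℂ) • E b) * (∑ b, (c b : ℂ) • E b))).trace).re
      ≤ ∑ b, (c b) ^ 2 * ((σ * E b).trace).re := by
  set C : Matrix (Fin D) (Fin D) ℂ := ∑ b, (c b : ℂ) • E b with hCdef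
  have hCherm : Cᴴ = C := by
    rw [hCdef]
    simp only [Matrix.conjTranspose_sum, Matrix.conjTranspose_smul]
    refine Finset.sum_congr rfl fun b _ => ?_
    rw [(hE b).isHermitian.eq, Complex.star_def, Complex.conj_ofReal]
  -- M = ∑ c_b² E_b − C² is psd
  have hM : (∑ b, ((c b : ℂ) ^ 2) • E b - C * C).PosSemidef := by
    have key : ∑ b, ((c b : ℂ) • 1 - C)ᴴ * E b * ((c b : ℂ) • 1 - C)
        = ∑ b, ((c b : ℂ) ^ 2) • E b - C * C := by
      have expand : ∀ b, ((c b : ℂ) • 1 - C)ᴴ * E b * ((c b : ℂ) • 1 - C)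
          = ((c b : ℂ) ^ 2) • E b - (c b : ℂ) • (E b * C)
            - (c b : ℂ) • (C * E b) + C * E b * C := by
        intro b
        have hconj : ((c b : ℂ) • 1 - C)ᴴ = (c b : ℂ) • 1 - C := by
          simp [Matrix.conjTranspose_smul, Matrix.conjTranspose_sub, hCherm,
            Complex.star_def, Complex.conj_ofReal]
        rw [hconj]
        simp only [Matrix.sub_mul, Matrix.mul_sub, Matrix.smul_mul, Matrix.mul_smul,
          Matrix.one_mul, Matrix.mul_one, smul_smul, ← pow_two]
        module
      rw [Finset.sum_congr rfl fun b _ => expand b]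
      rw [Finset.sum_add_distrib, Finset.sum_sub_distrib, Finset.sum_sub_distrib]
      have e1 : ∑ b, (c b : ℂ) • (E b * C) = C * C := by
        have : ∀ b, (c b : ℂ) • (E b * C) = ((c b : ℂ) • E b) * C := fun b =>
          (Matrix.smul_mul _ _ _).symm
        rw [Finset.sum_congr rfl fun b _ => this b, ← Finset.sum_mul, ← hCdef]
      have e2 : ∑ b, (c b : ℂ) • (C * E b) = C * C := by
        have : ∀ b, (c b : ℂ) • (C * E b) = C * ((c b : ℂ) • E b) := fun b =>
          (Matrix.mul_smul _ _ _).symm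
        rw [Finset.sum_congr rfl fun b _ => this b, ← Finset.mul_sum, ← hCdef]
      have e3 : ∑ b, C * E b * C = C * C := by
        have : ∀ b, C * E b * C = C * (E b * C) := fun b => Matrix.mul_assoc _ _ _
        rw [Finset.sum_congr rfl fun b _ => this b, ← Finset.mul_sum, ← Finset.sum_mul,
          hEsum, Matrix.one_mul]
      rw [e1, e2, e3]
      abel
    rw [← key]
    refine Finset.sum_induction _ _ (fun A B hA hB => hA.add hB) Matrix.PosSemidef.zero
      (fun b _ => ?_)
    exact (hE b).conjTranspose_mul_mul_same _
  have h0 := trace_mul_psd_nonneg hσ hM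
  have hexp : ((σ * (∑ b, ((c b : ℂ) ^ 2) • E b - C * C)).trace).re
      = (∑ b, (c b) ^ 2 * ((σ * E b).trace).re) - ((σ * (C * C)).trace).re := by
    rw [Matrix.mul_sub, Matrix.trace_sub, Complex.sub_re]
    congr 1
    rw [Matrix.mul_sum, Matrix.trace_sum, Complex.re_sum]
    refine Finset.sum_congr rfl fun b _ => ?_
    rw [Matrix.mul_smul, Matrix.trace_smul, smul_eq_mul, ← Complex.ofReal_pow,
      Complex.re_ofReal_mul]
  rw [hexp] at h0
  linarith

lemma convex_denom_pos {p q : ℝ} (hp : 0 < p) (hq : 0 < q) {u : ℝ}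
    (h0 : 0 ≤ u) (h1 : u ≤ 1) : 0 < u * p + (1 - u) * q := by
  rcases le_total p q with h | h
  · nlinarith
  · nlinarith

lemma log_integral {p q : ℝ} (hp : 0 < p) (hq : 0 < q) :
    ∫ u in (0:ℝ)..1, (p - q) / (u * p + (1 - u) * q) = Real.log p - Real.log q := by
  have huIcc : Set.uIcc (0:ℝ) 1 = Set.Icc 0 1 := Set.uIcc_of_le zero_le_one
  have hpos : ∀ u ∈ Set.uIcc (0:ℝ) 1, 0 < u * (p - q) + q := by
    intro u hu
    rw [huIcc] at hu
    have h := convex_denom_pos hp hq hu.1 hu.2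
    nlinarith [h]
  have heq : ∀ u, u * p + (1 - u) * q = u * (p - q) + q := fun u => by ring
  have hint : ∫ u in (0:ℝ)..1, (p - q) / (u * p + (1 - u) * q)
      = ∫ u in (0:ℝ)..1, (p - q) / (u * (p - q) + q) := by
    refine intervalIntegral.integral_congr fun u _ => ?_
    rw [heq]
  rw [hint]
  have hderiv : ∀ u ∈ Set.uIcc (0:ℝ) 1,
      HasDerivAt (fun t => Real.log (t * (p - q) + q)) ((p - q) / (u * (p - q) + q)) u := by
    intro u hu
    have h1 : HasDerivAt (fun t : ℝ => t * (p - q) + q) (p - q) u := by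
      simpa using ((hasDerivAt_id u).mul_const (p - q)).add_const q
    exact h1.log (ne_of_gt (hpos u hu))
  have hcont : IntervalIntegrable (fun u => (p - q) / (u * (p - q) + q)) MeasureTheory.volume 0 1 := by
    refine (ContinuousOn.div continuousOn_const ?_ fun u hu => ne_of_gt (hpos u hu)).intervalIntegrable
    fun_prop
  rw [intervalIntegral.integral_eq_sub_of_hasDerivAt hderiv hcont]
  norm_num

lemma sum_smul_herm (E : Fin n → Matrix (Fin D) (Fin D) ℂ) (hE : ∀ b, (E b).PosSemidef)
    (c : Fin n → ℝ) : (∑ b, (c b : ℂ) • E b)ᴴ = ∑ b, (c b : ℂ) • E b := by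
  simp only [Matrix.conjTranspose_sum, Matrix.conjTranspose_smul]
  refine Finset.sum_congr rfl fun b _ => ?_
  rw [(hE b).isHermitian.eq, Complex.star_def, Complex.conj_ofReal]

lemma key_ineq {D n : ℕ} (U W : Matrix (Fin D) (Fin D) ℂ) (r s : Fin D → ℝ)
    (ρ0 ρ1 : Matrix (Fin D) (Fin D) ℂ)
    (hρ0psd : ρ0.PosSemidef) (hρ1psd : ρ1.PosSemidef)
    (hρ0spec : ρ0 = U * Matrix.diagonal (fun i => ((r i : ℝ) : ℂ)) * Uᴴ)
    (hρ1spec : ρ1 = W * Matrix.diagonal (fun i => ((s i : ℝ) : ℂ)) * Wᴴ)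
    (hU1 : Uᴴ * U = 1) (hU2 : U * Uᴴ = 1) (hW2 : W * Wᴴ = 1)
    (hr : ∀ i, 0 < r i) (hs : ∀ i, 0 < s i) (hsum_r : ∑ i, r i = 1)
    (E : Fin n → Matrix (Fin D) (Fin D) ℂ) (hE : ∀ b, (E b).PosSemidef)
    (hEsum : ∑ b, E b = 1)
    (p q : Fin n → ℝ) (hp : ∀ b, 0 < p b) (hq : ∀ b, 0 < q b)
    (hsum_p : ∑ b, p b = 1)
    (hptr : ∀ b, p b = ((ρ0 * E b).trace).re)
    (hqtr : ∀ b, q b = ((ρ1 * E b).trace).re)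
    (u : ℝ) (hu0 : 0 < u) (hu1 : u < 1) :
    ∑ b, p b * ((p b - q b) / (u * p b + (1 - u) * q b))
      ≤ ∑ b, ∑ a, (‖(Wᴴ * U) a b‖ ^ 2 * r b) * ((r b - s a) / (u * r b + (1 - u) * s a)) := by
  have hβ : 0 < 1 - u := by linarith
  have hdenp : ∀ b, 0 < u * p b + (1 - u) * q b := fun b =>
    add_pos (mul_pos hu0 (hp b)) (mul_pos hβ (hq b))
  have hdenr : ∀ b a, 0 < u * r b + (1 - u) * s a := fun b a =>
    add_pos (mul_pos hu0 (hr b)) (mul_pos hβ (hs a))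
  -- column sums of the overlap matrix
  have hVV : (Wᴴ * U)ᴴ * (Wᴴ * U) = 1 := by
    rw [Matrix.conjTranspose_mul, Matrix.conjTranspose_conjTranspose]
    calc Uᴴ * W * (Wᴴ * U) = Uᴴ * (W * Wᴴ * U) := by simp only [Matrix.mul_assoc]
      _ = 1 := by rw [hW2, Matrix.one_mul, hU1]
  have hccol : ∀ b, ∑ a, ‖(Wᴴ * U) a b‖ ^ 2 = 1 := sum_sq_norm_col _ hVV
  -- the optimizer
  set lam : Fin n → ℝ := fun b => (1 - u) * q b / (u * p b + (1 - u) * q b) with hlam_def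
  set C : Matrix (Fin D) (Fin D) ℂ := ∑ b, ((lam b : ℝ) : ℂ) • E b with hC_def
  set D2 : Matrix (Fin D) (Fin D) ℂ := ∑ b, (((1 : ℝ) - lam b : ℝ) : ℂ) • E b with hD2_def
  have hCherm : Cᴴ = C := sum_smul_herm E hE lam
  have hD2herm : D2ᴴ = D2 := sum_smul_herm E hE (fun b => 1 - lam b)
  have hCD : C + D2 = 1 := by
    rw [hC_def, hD2_def, ← Finset.sum_add_distrib, ← hEsum]
    refine Finset.sum_congr rfl fun b _ => ?_
    rw [← add_smul]
    norm_num
  set K : Matrix (Fin D) (Fin D) ℂ := Wᴴ * (C * U) with hK_def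
  set L : Matrix (Fin D) (Fin D) ℂ := Wᴴ * (D2 * U) with hL_def
  have hKL : ∀ a b, (Wᴴ * U) a b = K a b + L a b := by
    intro a b
    have h : Wᴴ * U = K + L := by
      rw [hK_def, hL_def, ← Matrix.mul_add, ← Matrix.add_mul, hCD, Matrix.one_mul]
    rw [h, Matrix.add_apply]
  -- trace identities
  have hKtr : ((ρ0 * (C * C)).trace).re = ∑ b, ∑ a, r b * ‖K a b‖ ^ 2 := by
    rw [hρ0spec, trace_spectral_sq U W C r hW2 hCherm]
  have hLtr : ((ρ1 * (D2 * D2)).trace).re = ∑ b, ∑ a, s b * ‖L b a‖ ^ 2 := by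
    rw [hρ1spec, trace_spectral_sq W U D2 s hU2 hD2herm]
    refine Finset.sum_congr rfl fun b _ => Finset.sum_congr rfl fun a _ => ?_
    have hLconj : Lᴴ = Uᴴ * (D2 * W) := by
      rw [hL_def]
      simp only [Matrix.conjTranspose_mul, Matrix.conjTranspose_conjTranspose, hD2herm,
        Matrix.mul_assoc]
    have h2 : (Uᴴ * (D2 * W)) a b = star (L b a) := by
      rw [← hLconj, Matrix.conjTranspose_apply]
    rw [h2, norm_star]
  -- operator Cauchy-Schwarz bounds
  have hcs1 : ((ρ0 * (C * C)).trace).re ≤ ∑ b, (lam b) ^ 2 * p b := by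
    have h := op_cs hρ0psd E hE hEsum lam
    rw [← hC_def] at h
    refine h.trans_eq (Finset.sum_congr rfl fun b _ => ?_)
    rw [← hptr b]
  have hcs2 : ((ρ1 * (D2 * D2)).trace).re ≤ ∑ b, (1 - lam b) ^ 2 * q b := by
    have h := op_cs hρ1psd E hE hEsum (fun b => 1 - lam b)
    rw [← hD2_def] at h
    refine h.trans_eq (Finset.sum_congr rfl fun b _ => ?_)
    rw [← hqtr b]
  -- the central bound: Q ≤ T'
  have hQT : ∑ b, ∑ a, (‖(Wᴴ * U) a b‖ ^ 2 * r b) * (s a / (u * r b + (1 - u) * s a))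
      ≤ ∑ b, p b * (q b / (u * p b + (1 - u) * q b)) := by
    have step1 : ∀ b a, (‖(Wᴴ * U) a b‖ ^ 2 * r b) * (s a / (u * r b + (1 - u) * s a))
        ≤ r b * ‖K a b‖ ^ 2 / (1 - u) + s a * ‖L a b‖ ^ 2 / u := by
      intro b a
      have h := scalar_cs (hr b) (hs a) hu0 hβ (K a b) (L a b)
      rw [← hKL a b] at h
      calc (‖(Wᴴ * U) a b‖ ^ 2 * r b) * (s a / (u * r b + (1 - u) * s a))
          = ‖(Wᴴ * U) a b‖ ^ 2 * (r b * s a / (u * r b + (1 - u) * s a)) := by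
            rw [mul_assoc, mul_div_assoc]
        _ ≤ _ := h
    calc ∑ b, ∑ a, (‖(Wᴴ * U) a b‖ ^ 2 * r b) * (s a / (u * r b + (1 - u) * s a))
        ≤ ∑ b, ∑ a, (r b * ‖K a b‖ ^ 2 / (1 - u) + s a * ‖L a b‖ ^ 2 / u) :=
          Finset.sum_le_sum fun b _ => Finset.sum_le_sum fun a _ => step1 b a
      _ = (∑ b, ∑ a, r b * ‖K a b‖ ^ 2) / (1 - u) + (∑ b, ∑ a, s a * ‖L a b‖ ^ 2) / u := by
          rw [Finset.sum_div, Finset.sum_div, ← Finset.sum_add_distrib]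
          refine Finset.sum_congr rfl fun b _ => ?_
          rw [Finset.sum_div, Finset.sum_div, ← Finset.sum_add_distrib]
      _ ≤ (∑ b, (lam b) ^ 2 * p b) / (1 - u) + (∑ b, (1 - lam b) ^ 2 * q b) / u := by
          have e1 : ∑ b, ∑ a, r b * ‖K a b‖ ^ 2 ≤ ∑ b, (lam b) ^ 2 * p b := by
            rw [← hKtr]; exact hcs1
          have e2 : ∑ b, ∑ a, s a * ‖L a b‖ ^ 2 ≤ ∑ b, (1 - lam b) ^ 2 * q b := by
            have hswap : ∑ b, ∑ a, s a * ‖L a b‖ ^ 2 = ∑ b, ∑ a, s b * ‖L b a‖ ^ 2 :=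
              Finset.sum_comm
            rw [hswap, ← hLtr]; exact hcs2
          exact add_le_add ((div_le_div_iff_of_pos_right hβ).mpr e1) ((div_le_div_iff_of_pos_right hu0).mpr e2)
      _ = ∑ b, p b * (q b / (u * p b + (1 - u) * q b)) := by
          rw [Finset.sum_div, Finset.sum_div, ← Finset.sum_add_distrib]
          refine Finset.sum_congr rfl fun b _ => ?_
          have h := lambda_identity (hp b) (hq b) hu0 hβ
          rw [hlam_def]
          rw [mul_div_assoc] at h ⊢
          exact h.trans (by rw [← mul_div_assoc])
  -- final transformation
  have hGu : ∑ b, ∑ a, (‖(Wᴴ * U) a b‖ ^ 2 * r b) * ((r b - s a) / (u * r b + (1 - u) * s a))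
      = (1 / u) * (1 - ∑ b, ∑ a, (‖(Wᴴ * U) a b‖ ^ 2 * r b) * (s a / (u * r b + (1 - u) * s a))) := by
    have hterm : ∀ b a, (‖(Wᴴ * U) a b‖ ^ 2 * r b) * ((r b - s a) / (u * r b + (1 - u) * s a))
        = (1 / u) * ((‖(Wᴴ * U) a b‖ ^ 2 * r b)
            - (‖(Wᴴ * U) a b‖ ^ 2 * r b) * (s a / (u * r b + (1 - u) * s a))) :=
      fun b a => term_transform (hdenr b a).ne' hu0.ne'
    rw [Finset.sum_congr rfl fun b _ => Finset.sum_congr rfl fun a _ => hterm b a]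
    have hwsum : ∑ b, ∑ a, ‖(Wᴴ * U) a b‖ ^ 2 * r b = 1 := by
      rw [← hsum_r]
      refine Finset.sum_congr rfl fun b _ => ?_
      rw [← Finset.sum_mul, hccol b, one_mul]
    rw [← hwsum, ← Finset.sum_sub_distrib, Finset.mul_sum]
    refine Finset.sum_congr rfl fun b _ => ?_
    rw [← Finset.sum_sub_distrib, Finset.mul_sum]
  have hFu : ∑ b, p b * ((p b - q b) / (u * p b + (1 - u) * q b))
      = (1 / u) * (1 - ∑ b, p b * (q b / (u * p b + (1 - u) * q b))) := by
    rw [Finset.sum_congr rfl fun b _ => term_transform (hdenp b).ne' hu0.ne',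
      ← hsum_p, ← Finset.sum_sub_distrib, Finset.mul_sum]
  rw [hFu, hGu]
  have h1u : (0:ℝ) ≤ 1 / u := by positivity
  exact mul_le_mul_of_nonneg_left (by linarith [hQT]) h1u


lemma integrand_intervalIntegrable {p q : ℝ} (w : ℝ) (hp : 0 < p) (hq : 0 < q) :
    IntervalIntegrable (fun u => w * ((p - q) / (u * p + (1 - u) * q)))
      MeasureTheory.volume 0 1 := by
  apply ContinuousOn.intervalIntegrable
  apply ContinuousOn.mul continuousOn_const
  apply ContinuousOn.div continuousOn_const (by fun_prop)
  intro u hu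
  rw [Set.uIcc_of_le zero_le_one] at hu
  exact (convex_denom_pos hp hq hu.1 hu.2).ne'

lemma intervalIntegrable_fun_sum {ι : Type*} (sfin : Finset ι) {f : ι → ℝ → ℝ} {a b : ℝ}
    (h : ∀ i ∈ sfin, IntervalIntegrable (f i) MeasureTheory.volume a b) :
    IntervalIntegrable (fun u => ∑ i ∈ sfin, f i u) MeasureTheory.volume a b := by
  have h3 := IntervalIntegrable.sum sfin h
  rwa [show (∑ i ∈ sfin, f i) = fun u => ∑ i ∈ sfin, f i u from funext fun u => by simp] at h3

lemma log_integral_mul {p q : ℝ} (w : ℝ) (hp : 0 < p) (hq : 0 < q) :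
    ∫ u in (0:ℝ)..1, w * ((p - q) / (u * p + (1 - u) * q))
      = w * (Real.log p - Real.log q) := by
  rw [intervalIntegral.integral_const_mul, log_integral hp hq]

/-- The matrix logarithm of a Hermitian matrix, obtained by applying `Real.log` to the
eigenvalues in a spectral decomposition. -/
noncomputable def matLog {D : ℕ} {A : Matrix (Fin D) (Fin D) ℂ} (hA : A.IsHermitian) :
    Matrix (Fin D) (Fin D) ℂ :=
  (hA.eigenvectorUnitary : Matrix (Fin D) (Fin D) ℂ) *
    Matrix.diagonal (Complex.ofReal ∘ Real.log ∘ hA.eigenvalues) *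
    (star hA.eigenvectorUnitary : Matrix (Fin D) (Fin D) ℂ)

/-- Monotonicity of the Umegaki relative entropy under measurement: the classical
Kullback–Leibler information of the outcome distributions of any POVM (with nonzero
elements) on positive definite density matrices `ρ0, ρ1` is bounded above by
`tr(ρ0 (ln ρ0 − ln ρ1))`. -/
theorem kl_le_umegaki {D n : ℕ}
    (ρ0 ρ1 : Matrix (Fin D) (Fin D) ℂ)
    (hρ0 : ρ0.PosDef) (hρ1 : ρ1.PosDef)
    (hρ0t : ρ0.trace = 1) (hρ1t : ρ1.trace = 1)
    (E : Fin n → Matrix (Fin D) (Fin D) ℂ)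
    (hE : ∀ b, (E b).PosSemidef) (hEne : ∀ b, E b ≠ 0) (hEsum : ∑ b, E b = 1) :
    ∑ b, ((ρ0 * E b).trace).re * Real.log (((ρ0 * E b).trace).re / ((ρ1 * E b).trace).re)
      ≤ ((ρ0 * (matLog hρ0.isHermitian - matLog hρ1.isHermitian)).trace).re := by
    classical
  set r : Fin D → ℝ := hρ0.isHermitian.eigenvalues with hr_def
  set s : Fin D → ℝ := hρ1.isHermitian.eigenvalues with hs_def
  set U : Matrix (Fin D) (Fin D) ℂ :=
    (hρ0.isHermitian.eigenvectorUnitary : Matrix (Fin D) (Fin D) ℂ) with hU_def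
  set W : Matrix (Fin D) (Fin D) ℂ :=
    (hρ1.isHermitian.eigenvectorUnitary : Matrix (Fin D) (Fin D) ℂ) with hW_def
  have hU1 : Uᴴ * U = 1 := by
    rw [hU_def, ← Matrix.star_eq_conjTranspose]
    exact Matrix.mem_unitaryGroup_iff'.mp hρ0.isHermitian.eigenvectorUnitary.2
  have hU2 : U * Uᴴ = 1 := by
    rw [hU_def, ← Matrix.star_eq_conjTranspose]
    exact Matrix.mem_unitaryGroup_iff.mp hρ0.isHermitian.eigenvectorUnitary.2
  have hW1 : Wᴴ * W = 1 := by
    rw [hW_def, ← Matrix.star_eq_conjTranspose]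
    exact Matrix.mem_unitaryGroup_iff'.mp hρ1.isHermitian.eigenvectorUnitary.2
  have hW2 : W * Wᴴ = 1 := by
    rw [hW_def, ← Matrix.star_eq_conjTranspose]
    exact Matrix.mem_unitaryGroup_iff.mp hρ1.isHermitian.eigenvectorUnitary.2
  have hρ0spec : ρ0 = U * Matrix.diagonal (fun i => ((r i : ℝ) : ℂ)) * Uᴴ := by
    conv_lhs => rw [hρ0.isHermitian.spectral_theorem]
    rfl
  have hρ1spec : ρ1 = W * Matrix.diagonal (fun i => ((s i : ℝ) : ℂ)) * Wᴴ := by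
    conv_lhs => rw [hρ1.isHermitian.spectral_theorem]
    rfl
  have hr : ∀ i, 0 < r i := fun i => hρ0.eigenvalues_pos i
  have hs : ∀ i, 0 < s i := fun i => hρ1.eigenvalues_pos i
  set p : Fin n → ℝ := fun b => ((ρ0 * E b).trace).re with hp_def
  set q : Fin n → ℝ := fun b => ((ρ1 * E b).trace).re with hq_def
  show ∑ b, p b * Real.log (p b / q b)
      ≤ ((ρ0 * (matLog hρ0.isHermitian - matLog hρ1.isHermitian)).trace).re
  have hp : ∀ b, 0 < p b := fun b => trace_mul_pos hρ0 (hE b) (hEne b)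
  have hq : ∀ b, 0 < q b := fun b => trace_mul_pos hρ1 (hE b) (hEne b)
  have hsum_p : ∑ b, p b = 1 := by
    have h : ∑ b, (ρ0 * E b).trace = 1 := by
      rw [← Matrix.trace_sum, ← Matrix.mul_sum, hEsum, Matrix.mul_one, hρ0t]
    have h2 := congrArg Complex.re h
    rw [Complex.re_sum] at h2
    simpa using h2
  have hsum_r : ∑ i, r i = 1 := by
    have h := hρ0t
    rw [hρ0spec, trace_spectral_diag U r hU1] at h
    have h2 := congrArg Complex.re h
    rw [Complex.re_sum] at h2
    simpa using h2
  have hVV : (Wᴴ * U)ᴴ * (Wᴴ * U) = 1 := by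
    rw [Matrix.conjTranspose_mul, Matrix.conjTranspose_conjTranspose]
    calc Uᴴ * W * (Wᴴ * U) = Uᴴ * (W * Wᴴ * U) := by simp only [Matrix.mul_assoc]
      _ = 1 := by rw [hW2, Matrix.one_mul, hU1]
  have hccol : ∀ b, ∑ a, ‖(Wᴴ * U) a b‖ ^ 2 = 1 := sum_sq_norm_col _ hVV
  -- the right-hand side as a double sum
  have hRHS : ((ρ0 * (matLog hρ0.isHermitian - matLog hρ1.isHermitian)).trace).re
      = ∑ b, ∑ a, (‖(Wᴴ * U) a b‖ ^ 2 * r b) * (Real.log (r b) - Real.log (s a)) := by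
    have hlog0 : matLog hρ0.isHermitian
        = U * Matrix.diagonal (fun i => ((Real.log (r i) : ℝ) : ℂ)) * Uᴴ := rfl
    have hlog1 : matLog hρ1.isHermitian
        = W * Matrix.diagonal (fun i => ((Real.log (s i) : ℝ) : ℂ)) * Wᴴ := rfl
    rw [Matrix.mul_sub, Matrix.trace_sub, Complex.sub_re]
    have h1 : ((ρ0 * matLog hρ0.isHermitian).trace).re = ∑ b, r b * Real.log (r b) := by
      rw [hlog0, hρ0spec, trace_spectral_pair U U r (fun i => Real.log (r i)), hU1]
      refine Finset.sum_congr rfl fun b _ => ?_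
      rw [Finset.sum_eq_single b]
      · simp [Matrix.one_apply_eq]
      · intro a _ hab
        simp [Matrix.one_apply_ne hab]
      · intro hb
        exact absurd (Finset.mem_univ b) hb
    have h2 : ((ρ0 * matLog hρ1.isHermitian).trace).re
        = ∑ b, ∑ a, r b * (Real.log (s a) * ‖(Wᴴ * U) a b‖ ^ 2) := by
      rw [hlog1, hρ0spec]
      exact trace_spectral_pair U W r (fun i => Real.log (s i))
    rw [h1, h2]
    rw [show ∑ b, r b * Real.log (r b)
        = ∑ b, ∑ a, ‖(Wᴴ * U) a b‖ ^ 2 * (r b * Real.log (r b)) from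
      Finset.sum_congr rfl fun b _ => by rw [← Finset.sum_mul, hccol b, one_mul]]
    rw [← Finset.sum_sub_distrib]
    refine Finset.sum_congr rfl fun b _ => ?_
    rw [← Finset.sum_sub_distrib]
    refine Finset.sum_congr rfl fun a _ => ?_
    ring
  -- integral representations
  have hLHSlog : ∑ b, p b * Real.log (p b / q b)
      = ∑ b, p b * (Real.log (p b) - Real.log (q b)) :=
    Finset.sum_congr rfl fun b _ => by rw [Real.log_div (hp b).ne' (hq b).ne']
  have hFint : (∫ u in (0:ℝ)..1, ∑ b, p b * ((p b - q b) / (u * p b + (1 - u) * q b)))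
      = ∑ b, p b * (Real.log (p b) - Real.log (q b)) := by
    rw [intervalIntegral.integral_finset_sum
      (fun b _ => integrand_intervalIntegrable (p b) (hp b) (hq b))]
    exact Finset.sum_congr rfl fun b _ => log_integral_mul (p b) (hp b) (hq b)
  have hGint : (∫ u in (0:ℝ)..1, ∑ b, ∑ a,
        (‖(Wᴴ * U) a b‖ ^ 2 * r b) * ((r b - s a) / (u * r b + (1 - u) * s a)))
      = ∑ b, ∑ a, (‖(Wᴴ * U) a b‖ ^ 2 * r b) * (Real.log (r b) - Real.log (s a)) := by
    rw [intervalIntegral.integral_finset_sum (fun b _ => intervalIntegrable_fun_sum _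
      (fun a _ => integrand_intervalIntegrable (‖(Wᴴ * U) a b‖ ^ 2 * r b) (hr b) (hs a)))]
    refine Finset.sum_congr rfl fun b _ => ?_
    rw [intervalIntegral.integral_finset_sum
      (fun a _ => integrand_intervalIntegrable (‖(Wᴴ * U) a b‖ ^ 2 * r b) (hr b) (hs a))]
    exact Finset.sum_congr rfl fun a _ =>
      log_integral_mul (‖(Wᴴ * U) a b‖ ^ 2 * r b) (hr b) (hs a)
  -- pointwise inequality on (0,1)
  have hkey : ∀ u ∈ Set.Ioo (0:ℝ) 1,
      (∑ b, p b * ((p b - q b) / (u * p b + (1 - u) * q b)))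
        ≤ ∑ b, ∑ a, (‖(Wᴴ * U) a b‖ ^ 2 * r b) * ((r b - s a) / (u * r b + (1 - u) * s a)) :=
    fun u hu => key_ineq U W r s ρ0 ρ1 hρ0.posSemidef hρ1.posSemidef hρ0spec hρ1spec
      hU1 hU2 hW2 hr hs hsum_r E hE hEsum p q hp hq hsum_p
      (fun b => rfl) (fun b => rfl) u hu.1 hu.2
  -- monotonicity of the integral
  have hFI : IntervalIntegrable
      (fun u => ∑ b, p b * ((p b - q b) / (u * p b + (1 - u) * q b)))
      MeasureTheory.volume 0 1 :=
    intervalIntegrable_fun_sum _ (fun b _ => integrand_intervalIntegrable (p b) (hp b) (hq b))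
  have hGI : IntervalIntegrable
      (fun u => ∑ b, ∑ a, (‖(Wᴴ * U) a b‖ ^ 2 * r b) * ((r b - s a) / (u * r b + (1 - u) * s a)))
      MeasureTheory.volume 0 1 :=
    intervalIntegrable_fun_sum _ (fun b _ => intervalIntegrable_fun_sum _
      (fun a _ => integrand_intervalIntegrable (‖(Wᴴ * U) a b‖ ^ 2 * r b) (hr b) (hs a)))
  have hmono : (∫ u in (0:ℝ)..1, ∑ b, p b * ((p b - q b) / (u * p b + (1 - u) * q b)))
      ≤ ∫ u in (0:ℝ)..1, ∑ b, ∑ a,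
          (‖(Wᴴ * U) a b‖ ^ 2 * r b) * ((r b - s a) / (u * r b + (1 - u) * s a)) := by
    rw [intervalIntegral.integral_of_le zero_le_one,
      intervalIntegral.integral_of_le zero_le_one,
      MeasureTheory.integral_Ioc_eq_integral_Ioo,
      MeasureTheory.integral_Ioc_eq_integral_Ioo]
    exact MeasureTheory.setIntegral_mono_on
      (hFI.1.mono_set Set.Ioo_subset_Ioc_self)
      (hGI.1.mono_set Set.Ioo_subset_Ioc_self)
      measurableSet_Ioo hkey
  calc ∑ b, p b * Real.log (p b / q b)
      = ∑ b, p b * (Real.log (p b) - Real.log (q b)) := hLHSlog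
    _ = ∫ u in (0:ℝ)..1, ∑ b, p b * ((p b - q b) / (u * p b + (1 - u) * q b)) := hFint.symm
    _ ≤ ∫ u in (0:ℝ)..1, ∑ b, ∑ a,
          (‖(Wᴴ * U) a b‖ ^ 2 * r b) * ((r b - s a) / (u * r b + (1 - u) * s a)) := hmono
    _ = ∑ b, ∑ a, (‖(Wᴴ * U) a b‖ ^ 2 * r b) * (Real.log (r b) - Real.log (s a)) := hGint
    _ = _ := hRHS.symm
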